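/- Let γ > 1, θ = (γ-1)/2, λ = (3-γ)/(2(γ-1)), and ψ(s) = ½ s|s|, with weak entropy η̌(ρ,m) = ρ∫ψ(m/ρ + ρ^θ s)[1−s²]_+^λ ds. There exists M = M(γ) such that |∂_m η̌(ρ,m)| ≤ M(|u| + ρ^θ) and |∂_ρ η̌(ρ,m)| ≤ M(|u|² + ρ^{2θ}) for all ρ > 0, u = m/ρ. -/

import Mathlib

/-- The weak entropy generated by `ψ(s) = ½ s|s|`. -/
noncomputable def etaCheck (γ ρ m : ℝ) : ℝ :=
  ρ * ∫ s in (-1 : ℝ)..1,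
    (1 / 2 * (m / ρ + ρ ^ ((γ - 1) / 2) * s) * |m / ρ + ρ ^ ((γ - 1) / 2) * s|)
      * (1 - s ^ 2) ^ ((3 - γ) / (2 * (γ - 1)))

/-!
Since `ψ` is homogeneous of degree two, `ψ(u + ρ^θ s) = ρ^{2θ} ψ(t + s)` with
`t = m / ρ^{(γ+1)/2}`, so the entropy has the self-similar form `η̌(ρ, m) = ρ^γ H(t)`, where
`H(t) = ∫ ψ(t + s) w(s) ds` for the kernel `w(s) = (1 - s²)^λ`, integrable because `λ > -1`.
Differentiating under the integral, `H'(t) = ∫ |t + s| w(s) ds`, hence `|H(t)| ≲ (1 + |t|)²` and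
`|H'(t)| ≲ 1 + |t|`. The chain rule gives `∂_m η̌ = ρ^θ H'(t)` and
`∂_ρ η̌ = ρ^{2θ} (γ H(t) - (γ+1)/2 · t H'(t))`, and `u = ρ^θ t` turns these into the claimed
bounds.
-/

open MeasureTheory Real Set Filter Asymptotics

noncomputable section

def psi (y : ℝ) : ℝ := 1 / 2 * y * |y|

@[fun_prop]
theorem continuous_psi : Continuous psi := by
  unfold psi; fun_prop

theorem abs_psi (y : ℝ) : |psi y| = 1 / 2 * y ^ 2 := by
  rw [psi, abs_mul, abs_mul, abs_abs, mul_assoc, abs_mul_abs_self, sq]; norm_num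

theorem hasDerivAt_psi (x : ℝ) : HasDerivAt psi |x| x := by
  rcases eq_or_ne x 0 with rfl | hx
  · rw [hasDerivAt_iff_isLittleO_nhds_zero]
    refine (IsBigO.of_bound (1 / 2) (Eventually.of_forall fun h => ?_)).trans_isLittleO
      (isLittleO_pow_id one_lt_two)
    simp only [zero_add, abs_zero, smul_zero, sub_zero, norm_eq_abs, abs_psi,
      show psi 0 = 0 by simp [psi], abs_of_nonneg (sq_nonneg h), le_refl]
  · refine (((hasDerivAt_id x).const_mul (1 / 2 : ℝ)).mul (hasDerivAt_abs hx)).congr_deriv ?_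
    rw [id_eq, mul_assoc (1 / 2) x, self_mul_sign]; ring

theorem psi_add_mul {a : ℝ} (ha : 0 < a) (u s : ℝ) :
    psi (u + a * s) = a ^ 2 * psi (u / a + s) := by
  have : u + a * s = a * (u / a + s) := by field_simp
  rw [this, psi, psi, abs_mul, abs_of_pos ha]; ring

theorem intervalIntegrable_one_sub_sq_rpow {l : ℝ} (hl : -1 < l) :
    IntervalIntegrable (fun s : ℝ => (1 - s ^ 2) ^ l) volume (-1) 1 := by
  have left : IntervalIntegrable (fun s : ℝ => (1 - s) ^ l * (1 + s) ^ l) volume (-1) 0 := by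
    have := (intervalIntegral.intervalIntegrable_rpow' hl (a := 0) (b := 1)).comp_add_left 1
    norm_num at this
    refine this.continuousOn_mul (ContinuousOn.rpow_const (by fun_prop) fun s hs => Or.inl ?_)
    rw [uIcc_of_le (by norm_num)] at hs
    linarith [hs.2]
  have right : IntervalIntegrable (fun s : ℝ => (1 - s) ^ l * (1 + s) ^ l) volume 0 1 := by
    have := (intervalIntegral.intervalIntegrable_rpow' hl (a := 0) (b := 1)).comp_sub_left 1
    norm_num at this
    refine this.symm.mul_continuousOn
      (ContinuousOn.rpow_const (by fun_prop) fun s hs => Or.inl ?_)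
    rw [uIcc_of_le (by norm_num)] at hs
    linarith [hs.1]
  refine (left.trans right).congr fun s hs => ?_
  rw [uIoc_of_le (by norm_num)] at hs
  rw [← mul_rpow (by linarith [hs.2]) (by linarith [hs.1])]
  ring_nf

variable {w : ℝ → ℝ}

def psiConv (w : ℝ → ℝ) (t : ℝ) : ℝ := ∫ s in (-1 : ℝ)..1, psi (t + s) * w s

def absConv (w : ℝ → ℝ) (t : ℝ) : ℝ := ∫ s in (-1 : ℝ)..1, |t + s| * w s

theorem hasDerivAt_psiConv (hw : IntervalIntegrable w volume (-1) 1) (t : ℝ) :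
    HasDerivAt (psiConv w) (absConv w t) t := by
  have hint (g : ℝ → ℝ) (hg : Continuous g) :
      IntervalIntegrable (fun s => g s * w s) volume (-1) 1 :=
    hw.continuousOn_mul hg.continuousOn
  refine (intervalIntegral.hasDerivAt_integral_of_dominated_loc_of_deriv_le
    (F' := fun x s => |x + s| * w s) (bound := fun s => (|t| + 2) * |w s|)
    (Metric.ball_mem_nhds t one_pos)
    (Eventually.of_forall fun x => (hint _ (by fun_prop)).def'.aestronglyMeasurable)
    (hint _ (by fun_prop)) (hint _ (by fun_prop)).def'.aestronglyMeasurable ?_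
    (hw.abs.const_mul _) ?_).2
  · refine ae_of_all _ fun s hs x hx => ?_
    rw [uIoc_of_le (by norm_num)] at hs
    rw [Metric.mem_ball, dist_eq] at hx
    rw [norm_mul, norm_eq_abs, norm_eq_abs, abs_abs]
    gcongr
    calc |x + s| ≤ |x - t| + |t| + |s| := by
          have := abs_add_three (x - t) t s; ring_nf at this ⊢; linarith
      _ ≤ |t| + 2 := by linarith [abs_le.2 ⟨hs.1.le, hs.2⟩]
  · refine ae_of_all _ fun s _ x _ => ?_
    have := (hasDerivAt_psi (x + s)).comp x ((hasDerivAt_id x).add_const s)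
    simpa using this.mul_const (w s)

theorem abs_integral_mul_le {f : ℝ → ℝ} {a b c : ℝ} (hab : a ≤ b)
    (hw : IntervalIntegrable w volume a b) (hf : ∀ s ∈ Icc a b, |f s| ≤ c) :
    |∫ s in a..b, f s * w s| ≤ c * ∫ s in a..b, |w s| := by
  rw [← intervalIntegral.integral_const_mul, ← norm_eq_abs]
  refine intervalIntegral.norm_integral_le_of_norm_le (μ := volume) hab
    (ae_of_all _ fun s hs => ?_) (hw.abs.const_mul c)
  rw [norm_mul, norm_eq_abs, norm_eq_abs]
  exact mul_le_mul_of_nonneg_right (hf s (Ioc_subset_Icc_self hs)) (abs_nonneg _)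

theorem abs_add_le_of_mem_Icc {t s : ℝ} (hs : s ∈ Icc (-1 : ℝ) 1) : |t + s| ≤ |t| + 1 :=
  (abs_add_le t s).trans (by gcongr; exact abs_le.2 hs)

theorem abs_psiConv_le (hw : IntervalIntegrable w volume (-1) 1) (t : ℝ) :
    |psiConv w t| ≤ 1 / 2 * (|t| + 1) ^ 2 * ∫ s in (-1 : ℝ)..1, |w s| :=
  abs_integral_mul_le (by norm_num) hw fun s hs => by
    rw [abs_psi, ← sq_abs]
    gcongr
    exact abs_add_le_of_mem_Icc hs

theorem abs_absConv_le (hw : IntervalIntegrable w volume (-1) 1) (t : ℝ) :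
    |absConv w t| ≤ (|t| + 1) * ∫ s in (-1 : ℝ)..1, |w s| :=
  abs_integral_mul_le (by norm_num) hw fun s hs => by
    rw [abs_abs]; exact abs_add_le_of_mem_Icc hs

theorem abs_mul_psiConv_sub_le (hw : IntervalIntegrable w volume (-1) 1) {α β : ℝ}
    (hα : 0 ≤ α) (hβ : 0 ≤ β) (t : ℝ) :
    |α * psiConv w t - β * t * absConv w t|
      ≤ (α + 2 * β) * (∫ s in (-1 : ℝ)..1, |w s|) * (t ^ 2 + 1) := by
  have hL : 0 ≤ ∫ s in (-1 : ℝ)..1, |w s| :=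
    intervalIntegral.integral_nonneg (by norm_num) fun _ _ => abs_nonneg _
  have hP := abs_psiConv_le hw t
  have hA := abs_absConv_le hw t
  calc |α * psiConv w t - β * t * absConv w t|
      ≤ α * |psiConv w t| + β * |t| * |absConv w t| := by
        refine (abs_sub _ _).trans_eq ?_
        rw [abs_mul, abs_mul, abs_mul, abs_of_nonneg hα, abs_of_nonneg hβ]
    _ ≤ α * (1 / 2 * (|t| + 1) ^ 2 * ∫ s in (-1 : ℝ)..1, |w s|)
        + β * |t| * ((|t| + 1) * ∫ s in (-1 : ℝ)..1, |w s|) := by gcongr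
    _ ≤ (α + 2 * β) * (∫ s in (-1 : ℝ)..1, |w s|) * (t ^ 2 + 1) := by
        have h1 : 1 / 2 * (|t| + 1) ^ 2 ≤ t ^ 2 + 1 := by
          nlinarith [sq_abs t, sq_nonneg (|t| - 1)]
        have h2 : |t| * (|t| + 1) ≤ 2 * (t ^ 2 + 1) := by
          nlinarith [sq_abs t, sq_nonneg (|t| - 1)]
        nlinarith [mul_le_mul_of_nonneg_left h1 (mul_nonneg hα hL),
          mul_le_mul_of_nonneg_left h2 (mul_nonneg hβ hL)]

def entropyKernel (γ s : ℝ) : ℝ := (1 - s ^ 2) ^ ((3 - γ) / (2 * (γ - 1)))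

theorem intervalIntegrable_entropyKernel {γ : ℝ} (hγ : 1 < γ) :
    IntervalIntegrable (entropyKernel γ) volume (-1) 1 :=
  intervalIntegrable_one_sub_sq_rpow (by rw [lt_div_iff₀ (by linarith)]; linarith)

section Scaling

variable {γ ρ : ℝ} (hρ : 0 < ρ)
include hρ

theorem rpow_half_add_one_eq_mul : ρ ^ ((γ + 1) / 2) = ρ * ρ ^ ((γ - 1) / 2) := by
  rw [mul_comm, ← rpow_add_one hρ.ne']; ring_nf

theorem rpow_sub_one_eq_sq : ρ ^ (γ - 1) = (ρ ^ ((γ - 1) / 2)) ^ 2 := by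
  rw [← rpow_mul_natCast hρ.le]; push_cast; ring_nf

theorem rpow_eq_mul_sq : ρ ^ γ = ρ * (ρ ^ ((γ - 1) / 2)) ^ 2 := by
  rw [mul_comm, ← rpow_sub_one_eq_sq hρ, ← rpow_add_one hρ.ne']; ring_nf

theorem div_eq_rpow_mul_div_rpow (m : ℝ) :
    m / ρ = ρ ^ ((γ - 1) / 2) * (m / ρ ^ ((γ + 1) / 2)) := by
  rw [rpow_half_add_one_eq_mul hρ]
  field_simp

theorem etaCheck_eq (m : ℝ) :
    etaCheck γ ρ m = ρ ^ γ * psiConv (entropyKernel γ) (m / ρ ^ ((γ + 1) / 2)) := by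
  have ha : 0 < ρ ^ ((γ - 1) / 2) := rpow_pos_of_pos hρ _
  change ρ * ∫ s in (-1 : ℝ)..1,
    psi (m / ρ + ρ ^ ((γ - 1) / 2) * s) * entropyKernel γ s = _
  simp_rw [psi_add_mul ha, mul_assoc, intervalIntegral.integral_const_mul, div_div]
  rw [rpow_eq_mul_sq (γ := γ) hρ, rpow_half_add_one_eq_mul hρ, psiConv, mul_assoc]

theorem hasDerivAt_etaCheck_momentum (hγ : 1 < γ) (m : ℝ) :
    HasDerivAt (fun mm => etaCheck γ ρ mm)
      (ρ ^ ((γ - 1) / 2) * absConv (entropyKernel γ) (m / ρ ^ ((γ + 1) / 2))) m := by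
  have hH := hasDerivAt_psiConv (intervalIntegrable_entropyKernel hγ) (m / ρ ^ ((γ + 1) / 2))
  have := (hH.comp m ((hasDerivAt_id m).div_const _)).const_mul (ρ ^ γ)
  refine (this.congr_of_eventuallyEq (Eventually.of_forall (etaCheck_eq hρ))).congr_deriv ?_
  rw [rpow_eq_mul_sq (γ := γ) hρ, rpow_half_add_one_eq_mul hρ]
  field_simp

theorem hasDerivAt_etaCheck_density (hγ : 1 < γ) (m : ℝ) :
    HasDerivAt (fun r => etaCheck γ r m)
      (ρ ^ (γ - 1) * (γ * psiConv (entropyKernel γ) (m / ρ ^ ((γ + 1) / 2))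
        - (γ + 1) / 2 * (m / ρ ^ ((γ + 1) / 2))
          * absConv (entropyKernel γ) (m / ρ ^ ((γ + 1) / 2)))) ρ := by
  have hpow (p : ℝ) : HasDerivAt (fun r => r ^ p) (p * ρ ^ (p - 1)) ρ :=
    hasDerivAt_rpow_const (Or.inl hρ.ne')
  have hH := hasDerivAt_psiConv (intervalIntegrable_entropyKernel hγ) (m / ρ ^ ((γ + 1) / 2))
  have := (hpow γ).mul
    (hH.comp ρ ((hasDerivAt_const ρ m).div (hpow _) (rpow_pos_of_pos hρ _).ne'))
  refine (this.congr_of_eventuallyEq ?_).congr_deriv ?_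
  · filter_upwards [Ioi_mem_nhds hρ] with r hr using etaCheck_eq hr m
  dsimp only [Function.comp_apply, Pi.div_apply]
  rw [show (γ + 1) / 2 - 1 = (γ - 1) / 2 by ring, rpow_sub_one_eq_sq hρ,
    rpow_eq_mul_sq (γ := γ) hρ, rpow_half_add_one_eq_mul hρ]
  field_simp
  ring

theorem abs_deriv_etaCheck_momentum_le (hγ : 1 < γ) (m : ℝ) :
    |deriv (fun mm => etaCheck γ ρ mm) m|
      ≤ (∫ s in (-1 : ℝ)..1, |entropyKernel γ s|) * (|m / ρ| + ρ ^ ((γ - 1) / 2)) := by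
  have ha : 0 < ρ ^ ((γ - 1) / 2) := rpow_pos_of_pos hρ _
  set t := m / ρ ^ ((γ + 1) / 2)
  have hu : m / ρ = ρ ^ ((γ - 1) / 2) * t := div_eq_rpow_mul_div_rpow hρ m
  rw [(hasDerivAt_etaCheck_momentum hρ hγ m).deriv, abs_mul, abs_of_pos ha, hu, abs_mul,
    abs_of_pos ha]
  calc ρ ^ ((γ - 1) / 2) * |absConv (entropyKernel γ) t|
      ≤ ρ ^ ((γ - 1) / 2) * ((|t| + 1) * ∫ s in (-1 : ℝ)..1, |entropyKernel γ s|) := by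
        gcongr; exact abs_absConv_le (intervalIntegrable_entropyKernel hγ) t
    _ = _ := by ring

theorem abs_deriv_etaCheck_density_le (hγ : 1 < γ) (m : ℝ) :
    |deriv (fun r => etaCheck γ r m) ρ|
      ≤ (2 * γ + 1) * (∫ s in (-1 : ℝ)..1, |entropyKernel γ s|)
        * ((m / ρ) ^ 2 + ρ ^ (2 * ((γ - 1) / 2))) := by
  set t := m / ρ ^ ((γ + 1) / 2)
  have hu : m / ρ = ρ ^ ((γ - 1) / 2) * t := div_eq_rpow_mul_div_rpow hρ m
  rw [(hasDerivAt_etaCheck_density hρ hγ m).deriv, abs_mul, abs_of_pos (rpow_pos_of_pos hρ _),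
    show 2 * ((γ - 1) / 2) = γ - 1 by ring, rpow_sub_one_eq_sq hρ, hu]
  calc (ρ ^ ((γ - 1) / 2)) ^ 2 * |γ * psiConv (entropyKernel γ) t
        - (γ + 1) / 2 * t * absConv (entropyKernel γ) t|
      ≤ (ρ ^ ((γ - 1) / 2)) ^ 2 * ((γ + 2 * ((γ + 1) / 2))
        * (∫ s in (-1 : ℝ)..1, |entropyKernel γ s|) * (t ^ 2 + 1)) := by
        gcongr
        exact abs_mul_psiConv_sub_le (intervalIntegrable_entropyKernel hγ) (by linarith)
          (by linarith) t
    _ = _ := by ring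

end Scaling

end

/-- Derivative bounds `|∂_m η̌| ≤ M(|u| + ρ^θ)`, `|∂_ρ η̌| ≤ M(|u|² + ρ^{2θ})`. -/
theorem stmt10 (γ : ℝ) (hγ : 1 < γ) :
    ∃ M > 0, ∀ ρ m : ℝ, 0 < ρ →
      |deriv (fun mm : ℝ => etaCheck γ ρ mm) m| ≤ M * (|m / ρ| + ρ ^ ((γ - 1) / 2))
      ∧ |deriv (fun r : ℝ => etaCheck γ r m) ρ|
          ≤ M * ((m / ρ) ^ 2 + ρ ^ (2 * ((γ - 1) / 2))) := by
  set L := ∫ s in (-1 : ℝ)..1, |entropyKernel γ s|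
  have hL : 0 ≤ L := intervalIntegral.integral_nonneg (by norm_num) fun _ _ => abs_nonneg _
  refine ⟨(2 * γ + 1) * L + 1, by positivity, fun ρ m hρ => ⟨?_, ?_⟩⟩
  · refine (abs_deriv_etaCheck_momentum_le hρ hγ m).trans ?_
    gcongr
    nlinarith
  · refine (abs_deriv_etaCheck_density_le hρ hγ m).trans ?_
    gcongr
    linarith
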